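/- Let G be a group with finite generating set X and let H ≤ G be a subgroup. Suppose there is a constant K ≥ 0 and, for each h ∈ H, a word w_h over X ∪ X^{-1} representing h in G with Dep_X(w_h, H) ≤ K. Then H is finitely generated, and there exists a finite generating set Y for H such that the distortion function Δ of H in G with respect to Y and X satisfies Δ(l) ≤ max{|w_h| : h ∈ H, d_X(1, h) ≤ l} for all l, where |w_h| denotes the length of the word w_h. -/

import Mathlib

open Subgroup

/-- Reduced word length in a free group. -/
noncomputable def fgNorm {X : Type*} (w : FreeGroup X) : ℕ :=
  @FreeGroup.norm X (Classical.decEq X) w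

/-- `w` is a product of exactly `N` conjugates of elements of `R ∪ R⁻¹`. -/
def ExprOf {X : Type*} (R : Set (FreeGroup X)) (w : FreeGroup X) (N : ℕ) : Prop :=
  ∃ l : List (FreeGroup X × FreeGroup X),
    l.length = N ∧ (∀ p ∈ l, p.2 ∈ R ∨ p.2⁻¹ ∈ R) ∧
    (l.map fun p => p.1 * p.2 * p.1⁻¹).prod = w

/-- The area of a null-homotopic word: the least number of conjugates of relators needed. -/
noncomputable def area {X : Type*} (R : Set (FreeGroup X)) (w : FreeGroup X) : ℕ :=
  sInf {N | ExprOf R w N}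

/-- The Dehn function of the presentation with relator set `R`. -/
noncomputable def dehn {X : Type*} (R : Set (FreeGroup X)) (l : ℕ) : ℕ :=
  sSup {A | ∃ w ∈ Subgroup.normalClosure R, fgNorm w ≤ l ∧ A = area R w}

/-- `f ⪯ g`. -/
def Preceq (f g : ℕ → ℕ) : Prop := ∃ C : ℕ, ∀ l, f l ≤ C * g (C * l + C) + C * l + C

/-- `f ≃ g`. -/
def FEquiv (f g : ℕ → ℕ) : Prop := Preceq f g ∧ Preceq g f

/-- `φ` realizes `⟨X | R⟩` as a presentation of `G`. -/
def Presents {X : Type*} {G : Type*} [Group G] (R : Set (FreeGroup X))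
    (φ : FreeGroup X →* G) : Prop :=
  Function.Surjective φ ∧ φ.ker = Subgroup.normalClosure R

def FinitelyPresentedGroup (G : Type*) [Group G] : Prop :=
  ∃ (X : Type) (_ : Finite X) (R : Set (FreeGroup X)) (φ : FreeGroup X →* G),
    R.Finite ∧ Presents R φ

/-- `f` is an isoperimetric function for `G` : the Dehn function of every finite
presentation of `G` is `⪯ f`. -/
def IsIsopFunction (G : Type*) [Group G] (f : ℕ → ℕ) : Prop :=
  ∀ (X : Type) (R : Set (FreeGroup X)) (φ : FreeGroup X →* G),
    Finite X → R.Finite → Presents R φ → Preceq (dehn R) f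

/-- `(α, ρ)` is an area-radius pair for the presentation with relator set `R`. -/
def IsAreaRadiusPair {X : Type*} (R : Set (FreeGroup X)) (α ρ : ℕ → ℕ) : Prop :=
  ∀ w ∈ Subgroup.normalClosure R, ∀ l : ℕ, fgNorm w ≤ l →
    ∃ L : List (FreeGroup X × FreeGroup X), L.length ≤ α l ∧
      (∀ p ∈ L, (p.2 ∈ R ∨ p.2⁻¹ ∈ R) ∧ fgNorm p.1 ≤ ρ l) ∧
      (L.map fun p => p.1 * p.2 * p.1⁻¹).prod = w

/-- `g` is a product of at most `k` elements of `S ∪ S⁻¹`. -/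
def WordLe {G : Type*} [Group G] (S : Set G) (g : G) (k : ℕ) : Prop :=
  ∃ l : List G, l.length ≤ k ∧ (∀ x ∈ l, x ∈ S ∨ x⁻¹ ∈ S) ∧ l.prod = g

/-- Word length of `g` with respect to the generating set `S`. -/
noncomputable def wordLength {G : Type*} [Group G] (S : Set G) (g : G) : ℕ :=
  sInf {k | WordLe S g k}

/-- Distance from `g` to the subgroup `H` in the word metric determined by `S`. -/
noncomputable def distToSubgroup {G : Type*} [Group G] (S : Set G) (H : Subgroup G)
    (g : G) : ℕ :=
  sInf {k | ∃ h ∈ H, WordLe S (g⁻¹ * h) k}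

section AuxWordLe

variable {G : Type} [Group G]

lemma wordLe_mono {S : Set G} {g : G} {k k' : ℕ} (hkk : k ≤ k') (hg : WordLe S g k) :
    WordLe S g k' := by
  obtain ⟨l, h1, h2, h3⟩ := hg
  exact ⟨l, h1.trans hkk, h2, h3⟩

lemma wordLe_mul {S : Set G} {a b : G} {k m : ℕ} (ha : WordLe S a k) (hb : WordLe S b m) :
    WordLe S (a * b) (k + m) := by
  obtain ⟨l, h1, h2, h3⟩ := ha
  obtain ⟨l', h1', h2', h3'⟩ := hb
  refine ⟨l ++ l', ?_, ?_, ?_⟩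
  · simpa using Nat.add_le_add h1 h1'
  · intro x hx; rcases List.mem_append.1 hx with hx | hx
    · exact h2 x hx
    · exact h2' x hx
  · simp [h3, h3']

lemma wordLe_inv {S : Set G} {a : G} {k : ℕ} (ha : WordLe S a k) : WordLe S a⁻¹ k := by
  obtain ⟨l, h1, h2, h3⟩ := ha
  refine ⟨(l.map fun x => x⁻¹).reverse, by simpa using h1, ?_, ?_⟩
  · intro x hx
    simp only [List.mem_reverse, List.mem_map] at hx
    obtain ⟨y, hy, rfl⟩ := hx
    rcases h2 y hy with h | h
    · exact Or.inr (by simpa using h)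
    · exact Or.inl h
  · rw [← h3, ← List.prod_inv_reverse]

lemma exists_wordLe {X : Set G} (hXgen : Subgroup.closure X = ⊤) (g : G) :
    ∃ k, WordLe X g k := by
  have hg : g ∈ (Subgroup.closure X).toSubmonoid := by rw [hXgen]; trivial
  rw [Subgroup.closure_toSubmonoid] at hg
  obtain ⟨l, hl, hlp⟩ := Submonoid.exists_list_of_mem_closure hg
  refine ⟨l.length, l, le_rfl, ?_, hlp⟩
  intro x hx
  rcases hl x hx with h | h
  · exact Or.inl h
  · exact Or.inr (by simpa using h)

lemma wordLe_of_wordLength_le {X : Set G} (hXgen : Subgroup.closure X = ⊤) {g : G} {k : ℕ}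
    (h : wordLength X g ≤ k) : WordLe X g k := by
  have hne : {k | WordLe X g k}.Nonempty := exists_wordLe hXgen g
  exact wordLe_mono h (Nat.sInf_mem hne)

lemma finite_wordLe {S : Set G} (hS : S.Finite) (k : ℕ) : {g : G | WordLe S g k}.Finite := by
  have hT : (S ∪ S⁻¹).Finite := hS.union hS.inv
  haveI : Finite ↥(S ∪ S⁻¹) := hT.to_subtype
  have hsub : {g : G | WordLe S g k} ⊆
      (fun l : List ↥(S ∪ S⁻¹) => (l.map Subtype.val).prod) '' {l | l.length ≤ k} := by
    rintro g ⟨l, h1, h2, h3⟩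
    have hmem : ∀ x ∈ l, x ∈ S ∪ S⁻¹ := by
      intro x hx
      rcases h2 x hx with h | h
      · exact Or.inl h
      · exact Or.inr (by simpa using h)
    refine ⟨l.pmap (fun x hx => (⟨x, hx⟩ : ↥(S ∪ S⁻¹))) hmem, by simpa, ?_⟩
    simp only [List.map_pmap]
    rw [List.pmap_eq_map]
    simp [h3]
  exact Set.Finite.subset ((List.finite_length_le _ k).image _) hsub

lemma telescope_prod {H : Type*} [Group H] (c : ℕ → H) :
    ∀ m : ℕ, ((List.range m).map fun j => (c j)⁻¹ * c (j + 1)).prod = (c 0)⁻¹ * c m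
  | 0 => by simp
  | (m + 1) => by
      rw [List.range_succ, List.map_append, List.prod_append, telescope_prod c m]
      simp [mul_assoc]

end AuxWordLe

/-- If every element `h` of `H ≤ G` is represented by a word `w h` in the generators of `G`
all of whose prefixes stay `K`-close to `H`, then `H` is finitely generated, with distortion
controlled by the lengths of the words `w h`. -/
theorem close_words_give_finite_generation {G : Type} [Group G]
    (X : Set G) (hXfin : X.Finite) (hXgen : Subgroup.closure X = ⊤)
    (H : Subgroup G) (K : ℕ) (w : H → List G)
    (hw : ∀ h : H, (∀ x ∈ w h, x ∈ X ∨ x⁻¹ ∈ X) ∧ (w h).prod = (h : G) ∧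
      ∀ j : ℕ, distToSubgroup X H (((w h).take j).prod) ≤ K) :
    ∃ Y : Set H, Y.Finite ∧ Subgroup.closure Y = ⊤ ∧
      ∀ (l : ℕ) (h : H), wordLength X (h : G) ≤ l →
        wordLength Y h ≤
          sSup {m | ∃ h' : H, wordLength X (h' : G) ≤ l ∧ m = (w h').length} := by
  classical
  set Y : Set H := {y : H | WordLe X (y : G) (2 * K + 1)} with hY
  -- Key claim: every element of H is a product of (w h).length elements of Y
  have key : ∀ h : H, ∃ L : List H, L.length = (w h).length ∧ (∀ y ∈ L, y ∈ Y) ∧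
      L.prod = h := by
    intro h
    obtain ⟨hmem, hprod, hdep⟩ := hw h
    set m := (w h).length with hm
    set p : ℕ → G := fun j => ((w h).take j).prod with hp
    set P : ℕ → H → Prop := fun j y => WordLe X ((p j)⁻¹ * (y : G)) K with hPdef
    have hP : ∀ j, ∃ y : H, P j y := by
      intro j
      have hne : {k | ∃ h' ∈ H, WordLe X ((p j)⁻¹ * h') k}.Nonempty := by
        obtain ⟨k, hk⟩ := exists_wordLe hXgen ((p j)⁻¹ * (1 : G))
        exact ⟨k, 1, H.one_mem, hk⟩
      have hinf := Nat.sInf_mem hne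
      obtain ⟨h', hh'H, hh'w⟩ := hinf
      exact ⟨⟨h', hh'H⟩, wordLe_mono (hdep j) hh'w⟩
    set c : ℕ → H := fun j =>
      if h0 : j = 0 then 1 else if hj : j < m then Classical.choose (hP j) else h with hc
    have hc0 : c 0 = 1 := by simp [hc]
    have hcm : c m = h := by
      by_cases h0 : m = 0
      · have hwnil : w h = [] := List.length_eq_zero_iff.1 (by omega)
        have hh1 : (h : G) = 1 := by rw [← hprod, hwnil]; simp
        rw [h0, hc0]
        exact (Subtype.ext hh1).symm
      · simp [hc, h0]
    have hPc : ∀ j, P j (c j) := by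
      intro j
      by_cases h0 : j = 0
      · subst h0
        have : (p 0)⁻¹ * ((c 0 : H) : G) = 1 := by simp [hp, hc0]
        rw [hPdef]; dsimp only
        rw [this]
        exact ⟨[], by simp, by simp, by simp⟩
      · by_cases hj : j < m
        · have := Classical.choose_spec (hP j)
          simpa [hc, h0, hj] using this
        · have htake : (w h).take j = w h := List.take_of_length_le (by omega)
          have : (p j)⁻¹ * ((c j : H) : G) = 1 := by
            simp [hp, htake, hprod, hc, h0, hj]
          rw [hPdef]; dsimp only
          rw [this]
          exact ⟨[], by simp, by simp, by simp⟩
    refine ⟨(List.range m).map fun j => (c j)⁻¹ * c (j + 1), by simp, ?_, ?_⟩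
    · intro y hy
      simp only [List.mem_map, List.mem_range] at hy
      obtain ⟨j, hj, rfl⟩ := hy
      -- show WordLe X (↑((c j)⁻¹ * c (j+1))) (2K+1)
      have hx : WordLe X ((w h).get ⟨j, hj⟩) 1 := by
        refine ⟨[(w h).get ⟨j, hj⟩], by simp, ?_, by simp⟩
        intro x hx
        simp only [List.mem_singleton] at hx
        subst hx
        exact hmem _ (List.get_mem _ _)
      have hpsucc : p (j + 1) = p j * (w h).get ⟨j, hj⟩ := by
        simp only [hp]
        rw [List.take_succ, List.prod_append, List.getElem?_eq_getElem hj]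
        simp [List.get_eq_getElem]
      have ha : WordLe X (((c j : H) : G)⁻¹ * p j) K := by
        have := wordLe_inv (hPc j)
        simpa [mul_inv_rev] using this
      have hb : WordLe X ((p (j + 1))⁻¹ * ((c (j + 1) : H) : G)) K := hPc (j + 1)
      have heq : (((c j)⁻¹ * c (j + 1) : H) : G) =
          (((c j : H) : G)⁻¹ * p j) * ((w h).get ⟨j, hj⟩) *
            ((p (j + 1))⁻¹ * ((c (j + 1) : H) : G)) := by
        push_cast
        rw [hpsucc]
        group
      rw [hY, Set.mem_setOf_eq, heq]
      exact wordLe_mono (by omega) (wordLe_mul (wordLe_mul ha hx) hb)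
    · rw [telescope_prod c m, hc0, hcm]
      simp
  refine ⟨Y, ?_, ?_, ?_⟩
  · -- Y finite
    have : Y = Subtype.val ⁻¹' {g : G | WordLe X g (2 * K + 1)} := rfl
    rw [this]
    exact Set.Finite.preimage Subtype.coe_injective.injOn (finite_wordLe hXfin _)
  · -- closure Y = ⊤
    rw [eq_top_iff']
    intro h
    obtain ⟨L, _, hLY, hLp⟩ := key h
    rw [← hLp]
    exact Subgroup.list_prod_mem _ fun y hy => Subgroup.subset_closure (hLY y hy)
  · intro l h hlen
    have hbdd : BddAbove {m | ∃ h' : H, wordLength X (h' : G) ≤ l ∧ m = (w h').length} := by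
      have hfin : ({h' : H | WordLe X (h' : G) l}).Finite := by
        have heq : {h' : H | WordLe X (h' : G) l} =
            Subtype.val ⁻¹' {g : G | WordLe X g l} := rfl
        rw [heq]
        exact Set.Finite.preimage Subtype.coe_injective.injOn (finite_wordLe hXfin l)
      have hsub : {m | ∃ h' : H, wordLength X (h' : G) ≤ l ∧ m = (w h').length} ⊆
          (fun h' : H => (w h').length) '' {h' : H | WordLe X (h' : G) l} := by
        rintro m ⟨h', hh', rfl⟩
        exact ⟨h', wordLe_of_wordLength_le hXgen hh', rfl⟩
      exact (Set.Finite.subset (hfin.image _) hsub).bddAbove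
    have hmem : (w h).length ∈
        {m | ∃ h' : H, wordLength X (h' : G) ≤ l ∧ m = (w h').length} := ⟨h, hlen, rfl⟩
    refine le_trans ?_ (le_csSup hbdd hmem)
    obtain ⟨L, hLlen, hLY, hLp⟩ := key h
    exact Nat.sInf_le ⟨L, le_of_eq hLlen, fun y hy => Or.inl (hLY y hy), hLp⟩
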